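/- For every natural number i, the function (x, y) ↦ x^i · ln(y − 1 + √(x² + (y − 1)²)), defined at all points of K₀ with x > 0, is Lebesgue integrable on the reference triangle K₀ = {(x, y) ∈ ℝ² : 0 ≤ x, 0 ≤ y, x + y ≤ 1}. -/

import Mathlib

open MeasureTheory

/-- The reference triangle K₀ = {(x, y) : 0 ≤ x, 0 ≤ y, x + y ≤ 1}. -/
def K0 : Set (ℝ × ℝ) := {p : ℝ × ℝ | 0 ≤ p.1 ∧ 0 ≤ p.2 ∧ p.1 + p.2 ≤ 1}

/-!
With `u = 1 - y ∈ [0, 1]`, the argument of the logarithm is `√(x² + u²) - u = x² / (√(x² + u²) + u)`,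
which lies between `x² / 3` and `x`. Hence on the unit square the integrand is bounded in absolute
value by `2 |log x| + log 3`, a function of `x` alone that is integrable because `log` is
integrable near `0`.
-/

lemma IntegrableOn.comp_fst_prod {α β E : Type*} [MeasurableSpace α] [MeasurableSpace β]
    [NormedAddCommGroup E] {μ : Measure α} {ν : Measure β} [SFinite μ] [SFinite ν]
    {f : α → E} {s : Set α} {t : Set β} (hf : IntegrableOn f s μ) (ht : ν t ≠ ⊤) :
    IntegrableOn (fun p : α × β => f p.1) (s ×ˢ t) (μ.prod ν) := by
  have : IsFiniteMeasure (ν.restrict t) := isFiniteMeasure_restrict.mpr ht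
  rw [IntegrableOn, ← Measure.prod_restrict]
  exact hf.comp_fst _

lemma sq_div_three_le_sqrt_sq_add_sq_sub {x u : ℝ} (hx : 0 ≤ x) (hx1 : x ≤ 1) (hu1 : u ≤ 1) :
    x ^ 2 / 3 ≤ √(x ^ 2 + u ^ 2) - u := by
  have hr := Real.sq_sqrt (by positivity : 0 ≤ x ^ 2 + u ^ 2)
  have hur : u ≤ √(x ^ 2 + u ^ 2) := Real.le_sqrt_of_sq_le (by nlinarith)
  have hr3 : √(x ^ 2 + u ^ 2) + u ≤ 3 := by nlinarith [Real.sqrt_nonneg (x ^ 2 + u ^ 2)]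
  rw [div_le_iff₀ (by norm_num)]
  nlinarith

lemma sqrt_sq_add_sq_sub_le {x u : ℝ} (hx : 0 ≤ x) (hu : 0 ≤ u) : √(x ^ 2 + u ^ 2) - u ≤ x := by
  rw [sub_le_iff_le_add, Real.sqrt_le_left (by positivity)]
  nlinarith

lemma abs_log_le_of_sq_div_le {x t c : ℝ} (hx : 0 < x) (hc : 0 < c) (hlow : x ^ 2 / c ≤ t)
    (ht1 : t ≤ 1) : |Real.log t| ≤ 2 * |Real.log x| + Real.log c := by
  have ht : 0 < t := lt_of_lt_of_le (by positivity) hlow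
  have hlog_mono := Real.log_le_log (by positivity) hlow
  rw [Real.log_div (by positivity) hc.ne', Real.log_pow] at hlog_mono
  rw [abs_of_nonpos (Real.log_nonpos ht.le ht1)]
  push_cast at hlog_mono
  linarith [neg_abs_le (Real.log x)]

lemma norm_pow_mul_log_le {x y : ℝ} (i : ℕ) (hx : 0 ≤ x) (hx1 : x ≤ 1) (hy : 0 ≤ y)
    (hy1 : y ≤ 1) :
    ‖x ^ i * Real.log (y - 1 + √(x ^ 2 + (y - 1) ^ 2))‖ ≤ 2 * |Real.log x| + Real.log 3 := by
  have hlog3 : 0 ≤ Real.log 3 := Real.log_nonneg (by norm_num)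
  have harg : y - 1 + √(x ^ 2 + (y - 1) ^ 2) = √(x ^ 2 + (1 - y) ^ 2) - (1 - y) := by ring_nf
  rw [harg, norm_mul, norm_pow, Real.norm_of_nonneg hx, Real.norm_eq_abs]
  rcases hx.eq_or_lt with rfl | hx0
  · rw [zero_pow two_ne_zero, zero_add, Real.sqrt_sq (by linarith), sub_self, Real.log_zero,
      abs_zero, mul_zero]
    positivity
  · calc x ^ i * |Real.log (√(x ^ 2 + (1 - y) ^ 2) - (1 - y))|
          ≤ 1 * |Real.log (√(x ^ 2 + (1 - y) ^ 2) - (1 - y))| := by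
            gcongr
            exact pow_le_one₀ hx hx1
        _ ≤ 2 * |Real.log x| + Real.log 3 := by
            rw [one_mul]
            exact abs_log_le_of_sq_div_le hx0 (by norm_num)
              (sq_div_three_le_sqrt_sq_add_sq_sub hx hx1 (by linarith))
              ((sqrt_sq_add_sq_sub_le hx (by linarith)).trans hx1)

lemma integrableOn_unitSquare_two_mul_abs_log_add :
    IntegrableOn (fun p : ℝ × ℝ => 2 * |Real.log p.1| + Real.log 3)
      (Set.Icc 0 1 ×ˢ Set.Icc 0 1) := by
  have hlog : IntegrableOn Real.log (Set.Icc 0 1) :=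
    (intervalIntegrable_iff_integrableOn_Icc_of_le zero_le_one).mp
      intervalIntegral.intervalIntegrable_log'
  have hg : IntegrableOn (fun x : ℝ => 2 * |Real.log x| + Real.log 3) (Set.Icc 0 1) :=
    (hlog.norm.const_mul 2).add (integrableOn_const (by simp))
  rw [Measure.volume_eq_prod]
  exact IntegrableOn.comp_fst_prod hg (by simp)

/-- The edge-singular function (x, y) ↦ x^i ln(y − 1 + √(x² + (y − 1)²)) is Lebesgue
integrable on the reference triangle K₀. -/
theorem stmt_15 (i : ℕ) :
    IntegrableOn
      (fun p : ℝ × ℝ =>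
        p.1 ^ i * Real.log (p.2 - 1 + Real.sqrt (p.1 ^ 2 + (p.2 - 1) ^ 2)))
      K0 := by
  have hK0 : K0 ⊆ Set.Icc 0 1 ×ˢ Set.Icc 0 1 := by
    rintro ⟨x, y⟩ ⟨hx, hy, hxy⟩
    exact ⟨⟨hx, by linarith⟩, ⟨hy, by linarith⟩⟩
  refine IntegrableOn.mono_set ?_ hK0
  have hmeas : Measurable fun p : ℝ × ℝ =>
      p.1 ^ i * Real.log (p.2 - 1 + Real.sqrt (p.1 ^ 2 + (p.2 - 1) ^ 2)) := by fun_prop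
  refine integrableOn_unitSquare_two_mul_abs_log_add.mono' hmeas.aestronglyMeasurable ?_
  refine ae_restrict_of_forall_mem (measurableSet_Icc.prod measurableSet_Icc) ?_
  rintro ⟨x, y⟩ ⟨⟨hx, hx1⟩, ⟨hy, hy1⟩⟩
  exact norm_pow_mul_log_le i hx hx1 hy hy1
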